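/- arXiv:0912.0990 — 2 statements merged into one kernel-verified Lean document; each statement's English description precedes it below -/
import Mathlib

section
/- Let X be a set with a : X → ℤ and the metric d(x,y) = |a(x) − a(y)| if a(x) ≠ a(y), 2 if a(x) = a(y) and x ≠ y, 0 if x = y. For any x, y, z ∈ X, the Gromov product (y | z)ₓ = ½(d(x,y) + d(x,z) − d(y,z)) satisfies the 4-point hyperbolicity inequality with constant δ = 2: for all w, x, y, z ∈ X, d(w,x) + d(y,z) ≤ max(d(w,y) + d(x,z), d(w,z) + d(x,y)) + 4. -/
lemma line4 (p q r s : ℝ) :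
    |p - q| + |r - s| ≤ max (|p - r| + |q - s|) (|p - s| + |q - r|) := by
  rcases abs_cases (p - q) with ⟨h1, _⟩ | ⟨h1, _⟩ <;>
  rcases abs_cases (r - s) with ⟨h2, _⟩ | ⟨h2, _⟩ <;>
  rcases abs_cases (p - r) with ⟨h3, _⟩ | ⟨h3, _⟩ <;>
  rcases abs_cases (q - s) with ⟨h4, _⟩ | ⟨h4, _⟩ <;>
  rcases abs_cases (p - s) with ⟨h5, _⟩ | ⟨h5, _⟩ <;>
  rcases abs_cases (q - r) with ⟨h6, _⟩ | ⟨h6, _⟩ <;>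
  rw [h1, h2, h3, h4, h5, h6] <;>
  first
    | exact le_max_of_le_left (by linarith)
    | exact le_max_of_le_right (by linarith)

/-- the Gordian-type metric satisfies the four-point Gromov
hyperbolicity condition with constant `δ = 2`. -/
theorem stmt_2 {X : Type*} [DecidableEq X] (a : X → ℤ) (d : X → X → ℝ)
    (hd : ∀ x y : X,
      d x y = if x = y then 0 else if a x = a y then 2 else |(a x : ℝ) - (a y : ℝ)|) :
    ∀ w x y z : X,
      d w x + d y z ≤ max (d w y + d x z) (d w z + d x y) + 4 := by
  have hle : ∀ x y : X, d x y ≤ |(a x : ℝ) - (a y : ℝ)| + 2 := by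
    intro x y
    rw [hd]
    split_ifs with h h'
    · positivity
    · simp [h']
    · linarith [abs_nonneg ((a x : ℝ) - (a y : ℝ))]
  have hge : ∀ x y : X, |(a x : ℝ) - (a y : ℝ)| ≤ d x y := by
    intro x y
    rw [hd]
    split_ifs with h h'
    · simp [h]
    · simp [h']
    · exact le_rfl
  intro w x y z
  have h4 := line4 (a w : ℝ) (a x : ℝ) (a y : ℝ) (a z : ℝ)
  have hm : max (|(a w : ℝ) - a y| + |(a x : ℝ) - a z|)
      (|(a w : ℝ) - a z| + |(a x : ℝ) - a y|) ≤ max (d w y + d x z) (d w z + d x y) :=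
    max_le_max (add_le_add (hge w y) (hge x z)) (add_le_add (hge w z) (hge x y))
  have := hle w x
  have := hle y z
  linarith
end

section
/- Let G be the graph on vertex set ℤ × S (S nonempty) with (m,s) adjacent to (n,t) iff |m − n| = 1, equipped with the graph metric. Then for any three vertices x, y, z, and any geodesic vertex-paths joining them pairwise, each path lies in the closed 2-neighborhood of the union of the other two paths. -/
/-!
Along any path the layer (the `ℤ`-coordinate) moves by exactly one per step, and two vertices
whose layers differ by `d` are at distance at most `max d 2`. So a geodesic from `x` to `y` has
length at most `max |x.1 - y.1| 2`, which forces each of its vertices to lie within one layer of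
the interval between `x.1` and `y.1`. That interval is covered by the intervals spanned by the
other two sides, and by a discrete intermediate value argument the corresponding side visits the
nearby layer; two vertices at most two layers apart are at distance at most 2.
-/

/-- The layered graph on `ℤ × S`: `(m, s)` and `(n, t)` are adjacent iff
`|m − n| = 1`. -/
def layeredGraph (S : Type*) : SimpleGraph (ℤ × S) where
  Adj u v := |u.1 - v.1| = 1
  symm := by
    constructor
    intro u v h
    simpa [abs_sub_comm] using h
  loopless := by
    constructor
    intro u h
    simp at h

/-- `f` is a geodesic vertex-path of length `k` from `x` to `y` in `G`. -/
def IsGeodesicVertexPath {V : Type*} (G : SimpleGraph V) (x y : V) (k : ℕ)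
    (f : ℕ → V) : Prop :=
  f 0 = x ∧ f k = y ∧ (∀ i < k, G.Adj (f i) (f (i + 1))) ∧ k = G.dist x y

section UnitStep

variable {a : ℕ → ℤ} {k : ℕ}

theorem natAbs_sub_le_of_natAbs_step_le_one
    (hstep : ∀ i < k, (a (i + 1) - a i).natAbs ≤ 1) {i j : ℕ} (hij : i ≤ j)
    (hjk : j ≤ k) : (a j - a i).natAbs ≤ j - i := by
  induction j, hij using Nat.le_induction with
  | base => simp
  | succ j hij ih =>
    have := hstep j (by omega)
    have := ih (by omega)
    omega

theorem exists_eq_of_natAbs_step_le_one (hstep : ∀ i < k, (a (i + 1) - a i).natAbs ≤ 1)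
    {c : ℤ} (hc₀ : min (a 0) (a k) ≤ c) (hc₁ : c ≤ max (a 0) (a k)) :
    ∃ j ≤ k, a j = c := by
  induction k with
  | zero => exact ⟨0, le_rfl, by omega⟩
  | succ k ih =>
    by_cases hc : min (a 0) (a k) ≤ c ∧ c ≤ max (a 0) (a k)
    · obtain ⟨j, hj, hjc⟩ := ih (fun i hi => hstep i (by omega)) hc.1 hc.2
      exact ⟨j, by omega, hjc⟩
    · have := hstep k (by omega)
      exact ⟨k + 1, le_rfl, by omega⟩

end UnitStep

section LayeredGraph

variable {S : Type*}

theorem layeredGraph_adj_iff {u v : ℤ × S} :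
    (layeredGraph S).Adj u v ↔ (u.1 - v.1).natAbs = 1 := by
  change |u.1 - v.1| = 1 ↔ _
  rw [Int.abs_eq_natAbs]
  exact_mod_cast Iff.rfl

theorem layeredGraph_exists_walk_length_eq_natAbs {u v : ℤ × S} (h : u.1 ≠ v.1) :
    ∃ p : (layeredGraph S).Walk u v, p.length = (u.1 - v.1).natAbs := by
  generalize hn : (u.1 - v.1).natAbs = n
  induction n generalizing u with
  | zero => omega
  | succ n ih =>
    rcases Nat.eq_zero_or_pos n with rfl | hn₀
    · exact ⟨(layeredGraph_adj_iff.2 hn).toWalk, rfl⟩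
    · set w : ℤ × S := (if u.1 < v.1 then u.1 + 1 else u.1 - 1, u.2)
      have huw : (layeredGraph S).Adj u w :=
        layeredGraph_adj_iff.2 (by simp only [w]; split <;> omega)
      obtain ⟨p, hp⟩ := ih (u := w) (by simp only [w]; split <;> omega)
        (by simp only [w]; split <;> omega)
      exact ⟨.cons huw p, by simp [hp]⟩

theorem layeredGraph_dist_le_two {u v : ℤ × S} (h : (u.1 - v.1).natAbs ≤ 2) :
    (layeredGraph S).dist u v ≤ 2 := by
  by_cases h₁ : (u.1 - v.1).natAbs = 1
  · have := SimpleGraph.dist_le (layeredGraph_adj_iff.2 h₁).toWalk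
    simp only [SimpleGraph.Adj.toWalk, SimpleGraph.Walk.length_cons,
      SimpleGraph.Walk.length_nil] at this
    omega
  · set w : ℤ × S := (if u.1 < v.1 then u.1 + 1 else u.1 - 1, v.2)
    have huw : (layeredGraph S).Adj u w :=
      layeredGraph_adj_iff.2 (by simp only [w]; split <;> omega)
    have hwv : (layeredGraph S).Adj w v :=
      layeredGraph_adj_iff.2 (by simp only [w]; split <;> omega)
    simpa using SimpleGraph.dist_le (huw.toWalk.append hwv.toWalk)

theorem layeredGraph_dist_le_max (u v : ℤ × S) :
    (layeredGraph S).dist u v ≤ max (u.1 - v.1).natAbs 2 := by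
  by_cases h : (u.1 - v.1).natAbs ≤ 2
  · exact (layeredGraph_dist_le_two h).trans (le_max_right _ _)
  · obtain ⟨p, hp⟩ := layeredGraph_exists_walk_length_eq_natAbs (u := u) (v := v) (by omega)
    exact (SimpleGraph.dist_le p).trans (hp ▸ le_max_left _ _)

end LayeredGraph

namespace IsGeodesicVertexPath

variable {S : Type*} {x y : ℤ × S} {k : ℕ} {f : ℕ → ℤ × S}

theorem layer_natAbs_step_le_one (hf : IsGeodesicVertexPath (layeredGraph S) x y k f) :
    ∀ i < k, ((f (i + 1)).1 - (f i).1).natAbs ≤ 1 := fun i hi => by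
  have := layeredGraph_adj_iff.1 (hf.2.2.1 i hi)
  omega

theorem exists_layer_eq (hf : IsGeodesicVertexPath (layeredGraph S) x y k f) {c : ℤ}
    (hc₀ : min x.1 y.1 ≤ c) (hc₁ : c ≤ max x.1 y.1) : ∃ j ≤ k, (f j).1 = c :=
  exists_eq_of_natAbs_step_le_one (a := fun j => (f j).1) hf.layer_natAbs_step_le_one
    (by simpa only [hf.1, hf.2.1] using hc₀) (by simpa only [hf.1, hf.2.1] using hc₁)

/-- Since a geodesic is at most 2 longer than the layer gap of its endpoints, each of its
vertices is within one layer of the interval between them. -/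
theorem exists_layer_near (hf : IsGeodesicVertexPath (layeredGraph S) x y k f) {i : ℕ}
    (hi : i ≤ k) :
    ∃ c, min x.1 y.1 ≤ c ∧ c ≤ max x.1 y.1 ∧ ((f i).1 - c).natAbs ≤ 1 := by
  have hx := natAbs_sub_le_of_natAbs_step_le_one (a := fun j => (f j).1)
    hf.layer_natAbs_step_le_one (Nat.zero_le i) hi
  have hy := natAbs_sub_le_of_natAbs_step_le_one (a := fun j => (f j).1)
    hf.layer_natAbs_step_le_one hi le_rfl
  simp only [hf.1, hf.2.1] at hx hy
  have hk : k ≤ max (x.1 - y.1).natAbs 2 := hf.2.2.2 ▸ layeredGraph_dist_le_max x y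
  exact ⟨max (min x.1 y.1) (min (f i).1 (max x.1 y.1)), by omega, by omega, by omega⟩

end IsGeodesicVertexPath

theorem layeredGraph_geodesic_triangle_slim {S : Type*} {x y z : ℤ × S} {k₁ k₂ k₃ : ℕ}
    {f₁ f₂ f₃ : ℕ → ℤ × S} (h₁ : IsGeodesicVertexPath (layeredGraph S) x y k₁ f₁)
    (h₂ : IsGeodesicVertexPath (layeredGraph S) y z k₂ f₂)
    (h₃ : IsGeodesicVertexPath (layeredGraph S) z x k₃ f₃) :
    ∀ i ≤ k₁, (∃ j ≤ k₂, (layeredGraph S).dist (f₁ i) (f₂ j) ≤ 2) ∨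
      (∃ j ≤ k₃, (layeredGraph S).dist (f₁ i) (f₃ j) ≤ 2) := by
  intro i hi
  obtain ⟨c, hc₀, hc₁, hic⟩ := h₁.exists_layer_near hi
  by_cases hyz : min y.1 z.1 ≤ c ∧ c ≤ max y.1 z.1
  · obtain ⟨j, hj, hjc⟩ := h₂.exists_layer_eq hyz.1 hyz.2
    exact .inl ⟨j, hj, layeredGraph_dist_le_two (by omega)⟩
  · obtain ⟨j, hj, hjc⟩ := h₃.exists_layer_eq (c := c) (by omega) (by omega)
    exact .inr ⟨j, hj, layeredGraph_dist_le_two (by omega)⟩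

theorem stmt_11_general (S : Type*) (x y z : ℤ × S)
    (k₁ k₂ k₃ : ℕ) (f₁ f₂ f₃ : ℕ → ℤ × S)
    (h₁ : IsGeodesicVertexPath (layeredGraph S) x y k₁ f₁)
    (h₂ : IsGeodesicVertexPath (layeredGraph S) y z k₂ f₂)
    (h₃ : IsGeodesicVertexPath (layeredGraph S) z x k₃ f₃) :
    (∀ i ≤ k₁, (∃ j ≤ k₂, (layeredGraph S).dist (f₁ i) (f₂ j) ≤ 2) ∨
      (∃ j ≤ k₃, (layeredGraph S).dist (f₁ i) (f₃ j) ≤ 2)) ∧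
    (∀ i ≤ k₂, (∃ j ≤ k₃, (layeredGraph S).dist (f₂ i) (f₃ j) ≤ 2) ∨
      (∃ j ≤ k₁, (layeredGraph S).dist (f₂ i) (f₁ j) ≤ 2)) ∧
    (∀ i ≤ k₃, (∃ j ≤ k₁, (layeredGraph S).dist (f₃ i) (f₁ j) ≤ 2) ∨
      (∃ j ≤ k₂, (layeredGraph S).dist (f₃ i) (f₂ j) ≤ 2)) :=
  ⟨layeredGraph_geodesic_triangle_slim h₁ h₂ h₃,
    layeredGraph_geodesic_triangle_slim h₂ h₃ h₁,
    layeredGraph_geodesic_triangle_slim h₃ h₁ h₂⟩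

/-- in the layered graph, any geodesic triangle (three geodesic
vertex-paths joining three vertices pairwise) is 2-slim: each path lies in the
closed 2-neighborhood of the union of the other two. -/
theorem stmt_11 (S : Type*) [Nonempty S] (x y z : ℤ × S)
    (k₁ k₂ k₃ : ℕ) (f₁ f₂ f₃ : ℕ → ℤ × S)
    (h₁ : IsGeodesicVertexPath (layeredGraph S) x y k₁ f₁)
    (h₂ : IsGeodesicVertexPath (layeredGraph S) y z k₂ f₂)
    (h₃ : IsGeodesicVertexPath (layeredGraph S) z x k₃ f₃) :
    (∀ i ≤ k₁, (∃ j ≤ k₂, (layeredGraph S).dist (f₁ i) (f₂ j) ≤ 2) ∨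
      (∃ j ≤ k₃, (layeredGraph S).dist (f₁ i) (f₃ j) ≤ 2)) ∧
    (∀ i ≤ k₂, (∃ j ≤ k₃, (layeredGraph S).dist (f₂ i) (f₃ j) ≤ 2) ∨
      (∃ j ≤ k₁, (layeredGraph S).dist (f₂ i) (f₁ j) ≤ 2)) ∧
    (∀ i ≤ k₃, (∃ j ≤ k₁, (layeredGraph S).dist (f₃ i) (f₁ j) ≤ 2) ∨
      (∃ j ≤ k₂, (layeredGraph S).dist (f₃ i) (f₂ j) ≤ 2)) :=
  stmt_11_general S x y z k₁ k₂ k₃ f₁ f₂ f₃ h₁ h₂ h₃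
end
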